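/- arXiv:2302.08135 — 2 statements merged into one kernel-verified Lean document; each statement's English description precedes it below -/
import Mathlib

section
/- The TRDM revenue is at least the revenue of the second-price auction run without referrals: under truthful bidding, b*_{V_{-r_s^*}} is at least the second-highest valuation among the children of s in G (taken as 0 if s has fewer than two children). Equivalently, for every child c of s other than r_s^*, c belongs to V_{-r_s^*}, so max_{j∈V_{-r_s^*}} v_j ≥ max over children c ≠ r_s^* of v_c, which is at least the second-highest valuation among s's children. -/
open Classical

/-- A finite directed tree rooted at the seller `s`: every vertex reaches `s`
by iterating the parent map, and the root is its own parent. The agents are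
the non-root vertices. -/
structure DiffusionTree (α : Type*) where
  s : α
  parent : α → α
  parent_s : parent s = s
  reaches_s : ∀ x : α, ∃ n : ℕ, parent^[n] x = s

namespace DiffusionTree

variable {α : Type*} [Fintype α]

/-- The set of agents: all vertices except the seller. -/
noncomputable def agents (T : DiffusionTree α) : Finset α :=
  Finset.univ.filter (fun x => x ≠ T.s)

/-- `T.desc i j` : `j` is a strict descendant of `i`. -/
def desc (T : DiffusionTree α) (i j : α) : Prop :=
  ∃ n : ℕ, 0 < n ∧ T.parent^[n] j = i

/-- `V_{-i}` relative to the active agent set `A`: remove `i` and its descendants. -/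
noncomputable def Vminus (T : DiffusionTree α) (A : Finset α) (i : α) : Finset α :=
  A.filter (fun j => j ≠ i ∧ ¬ T.desc i j)

/-- `b*_S`: the highest bid in `S`, with `b*_∅ = 0`. -/
noncomputable def bstar (b : α → ℝ) (S : Finset α) : ℝ :=
  WithBot.unbotD 0 ((S.image b).max)

/-- Distance from a vertex to the root. -/
noncomputable def depth (T : DiffusionTree α) (x : α) : ℕ :=
  Nat.find (T.reaches_s x)

/-- The vertex `a_j` on the path `s = a_0, a_1, …, a_k = w` from `s` to `w`. -/
noncomputable def pathVx (T : DiffusionTree α) (w : α) (j : ℕ) : α :=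
  T.parent^[T.depth w - j] w

/-- TRDM payments, on the active agent set `A`, for bids `b` and winner `w`:
the winner pays `b*_{V_{-w}}`; an intermediate path agent `a_j` pays
`b*_{V_{-a_j}} − b*_{V_{-a_{j+1}}}`; everyone else pays `0`. -/
noncomputable def payment (T : DiffusionTree α) (A : Finset α) (b : α → ℝ)
    (w : α) (x : α) : ℝ :=
  if x = w then bstar b (T.Vminus A w)
  else if ∃ j : ℕ, 1 ≤ j ∧ j < T.depth w ∧ T.pathVx w j = x then
    bstar b (T.Vminus A x) - bstar b (T.Vminus A (T.pathVx w (T.depth x + 1)))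
  else 0

/-- TRDM utility of an agent `i` with true valuation `v`. -/
noncomputable def util (T : DiffusionTree α) (A : Finset α) (b : α → ℝ)
    (w : α) (v : ℝ) (i : α) : ℝ :=
  (if i = w then v else 0) - T.payment A b w i

end DiffusionTree

/-! The first-level agents other than `r_s^*` have only the seller above them, so none of them
descends from `r_s^*`: they all stay in `V_{-r_s^*}`, and the revenue `b*_{V_{-r_s^*}}` is a
maximum over a superset of them. The second-highest bid among the seller's children is in turn
bounded by the highest bid among the children other than any fixed one `r`: a child beaten by
some child is either itself different from `r`, or beaten by a child different from `r`. -/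

namespace DiffusionTree

variable {α : Type*}

section bstar

variable {b : α → ℝ} {S S' : Finset α}

theorem le_bstar {x : α} (hx : x ∈ S) : b x ≤ bstar b S :=
  WithBot.coe_le_coe.1 <|
    (Finset.le_max (S.mem_image_of_mem b hx)).trans (WithBot.le_coe_unbotD _ 0)

theorem bstar_le {t : ℝ} (h : ∀ x ∈ S, b x ≤ t) (ht : 0 ≤ t) : bstar b S ≤ t := by
  unfold bstar
  cases hm : (S.image b).max with
  | bot => simpa using ht
  | coe m =>
    obtain ⟨x, hx, rfl⟩ := Finset.mem_image.1 (Finset.mem_of_max hm)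
    exact h x hx

theorem bstar_nonneg (h : ∀ x ∈ S, 0 ≤ b x) : 0 ≤ bstar b S := by
  rcases S.eq_empty_or_nonempty with rfl | ⟨x, hx⟩
  · simp [bstar]
  · exact (h x hx).trans (le_bstar hx)

theorem bstar_mono (hS : S ⊆ S') (h : ∀ x ∈ S', 0 ≤ b x) : bstar b S ≤ bstar b S' :=
  bstar_le (fun _ hx => le_bstar (hS hx)) (bstar_nonneg h)

theorem bstar_filter_exists_lt_le_bstar_erase (h : ∀ x ∈ S, 0 ≤ b x) (r : α) :
    bstar b (S.filter fun c => ∃ c' ∈ S, b c < b c') ≤ bstar b (S.erase r) := by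
  refine bstar_le ?_ (bstar_nonneg fun x hx => h x (Finset.mem_of_mem_erase hx))
  rintro c hc
  obtain ⟨hcS, c', hc'S, hlt⟩ := Finset.mem_filter.1 hc
  by_cases hcr : c = r
  · have hc'r : c' ≠ r := by rintro rfl; exact hlt.ne (congrArg b hcr)
    exact hlt.le.trans (le_bstar (Finset.mem_erase.2 ⟨hc'r, hc'S⟩))
  · exact le_bstar (Finset.mem_erase.2 ⟨hcr, hcS⟩)

end bstar

variable (T : DiffusionTree α)

theorem depth_pos {x : α} (hx : x ≠ T.s) : 0 < T.depth x :=
  Nat.pos_of_ne_zero fun h => hx ((Nat.find_eq_zero (T.reaches_s x)).1 h)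

theorem pathVx_one_ne_s {w : α} (hw : w ≠ T.s) : T.pathVx w 1 ≠ T.s :=
  Nat.find_min (T.reaches_s w) (Nat.sub_lt (T.depth_pos hw) one_pos)

theorem not_desc_of_parent_eq_s {i c : α} (hi : i ≠ T.s) (hc : T.parent c = T.s) :
    ¬ T.desc i c := by
  rintro ⟨_ | n, hn0, hn⟩
  · exact absurd hn0 (lt_irrefl 0)
  rw [Function.iterate_succ_apply, hc, Function.iterate_fixed T.parent_s] at hn
  exact hi hn.symm

theorem mem_Vminus_of_parent_eq_s {A : Finset α} {i c : α} (hi : i ≠ T.s) (hcA : c ∈ A)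
    (hc : T.parent c = T.s) (hci : c ≠ i) : c ∈ T.Vminus A i :=
  Finset.mem_filter.2 ⟨hcA, hci, T.not_desc_of_parent_eq_s hi hc⟩

end DiffusionTree

open DiffusionTree in
theorem trdm_revenue_ge_second_price_general
    {α : Type*} [Fintype α] (T : DiffusionTree α)
    (v : α → ℝ) (hpos : ∀ j ∈ T.agents, 0 ≤ v j)
    (w : α) (hw : w ∈ T.agents) :
    -- every child of `s` other than `r_s^*` belongs to `V_{-r_s^*}`
    (∀ c ∈ T.agents.filter (fun c => T.parent c = T.s), c ≠ T.pathVx w 1 →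
      c ∈ T.Vminus T.agents (T.pathVx w 1)) ∧
    -- so the revenue is at least the highest valuation among the other children
    bstar v ((T.agents.filter (fun c => T.parent c = T.s)).erase (T.pathVx w 1))
      ≤ bstar v (T.Vminus T.agents (T.pathVx w 1)) ∧
    -- which is at least the second-highest valuation among `s`'s children
    bstar v ((T.agents.filter (fun c => T.parent c = T.s)).filter
        (fun c => ∃ c' ∈ T.agents.filter (fun c => T.parent c = T.s), v c < v c'))
      ≤ bstar v ((T.agents.filter (fun c => T.parent c = T.s)).erase (T.pathVx w 1)) ∧
    -- hence the TRDM revenue is at least the second-price revenue without referrals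
    bstar v ((T.agents.filter (fun c => T.parent c = T.s)).filter
        (fun c => ∃ c' ∈ T.agents.filter (fun c => T.parent c = T.s), v c < v c'))
      ≤ bstar v (T.Vminus T.agents (T.pathVx w 1)) := by
  have hr : T.pathVx w 1 ≠ T.s := T.pathVx_one_ne_s (Finset.mem_filter.1 hw).2
  have hchildren : ∀ c ∈ T.agents.filter (fun c => T.parent c = T.s), c ≠ T.pathVx w 1 →
      c ∈ T.Vminus T.agents (T.pathVx w 1) := fun c hc hcr =>
    T.mem_Vminus_of_parent_eq_s hr (Finset.mem_filter.1 hc).1 (Finset.mem_filter.1 hc).2 hcr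
  have hrevenue : bstar v ((T.agents.filter (fun c => T.parent c = T.s)).erase (T.pathVx w 1))
      ≤ bstar v (T.Vminus T.agents (T.pathVx w 1)) := bstar_mono
    (fun c hc => hchildren c (Finset.mem_of_mem_erase hc) (Finset.ne_of_mem_erase hc))
    (fun j hj => hpos j (Finset.mem_filter.1 hj).1)
  have hsecond := bstar_filter_exists_lt_le_bstar_erase
    (S := T.agents.filter (fun c => T.parent c = T.s))
    (fun j hj => hpos j (Finset.mem_filter.1 hj).1) (T.pathVx w 1)
  exact ⟨hchildren, hrevenue, hsecond, hsecond.trans hrevenue⟩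

open DiffusionTree in
/-- The TRDM revenue is at least the revenue of the second-price
auction run without referrals: under truthful bidding, `b*_{V_{-r_s^*}}` is at least
the second-highest valuation among the children of `s` (taken as `0` if `s` has
fewer than two children). Indeed, every child `c ≠ r_s^*` of `s` belongs to
`V_{-r_s^*}`, so `max_{j∈V_{-r_s^*}} v_j ≥ max_{c child of s, c ≠ r_s^*} v_c`, which
is at least the second-highest valuation among `s`'s children. (The second-highest
valuation among the children is the maximum valuation among the non-top children.) -/
theorem trdm_revenue_ge_second_price
    {α : Type*} [Fintype α] (T : DiffusionTree α)
    (v : α → ℝ) (hpos : ∀ j ∈ T.agents, 0 ≤ v j)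
    (hdist : ∀ j ∈ T.agents, ∀ j' ∈ T.agents, j ≠ j' → v j ≠ v j')
    (w : α) (hw : w ∈ T.agents)
    (hmax : ∀ j ∈ T.agents, j ≠ w → v j < v w) :
    -- every child of `s` other than `r_s^*` belongs to `V_{-r_s^*}`
    (∀ c ∈ T.agents.filter (fun c => T.parent c = T.s), c ≠ T.pathVx w 1 →
      c ∈ T.Vminus T.agents (T.pathVx w 1)) ∧
    -- so the revenue is at least the highest valuation among the other children
    bstar v ((T.agents.filter (fun c => T.parent c = T.s)).erase (T.pathVx w 1))
      ≤ bstar v (T.Vminus T.agents (T.pathVx w 1)) ∧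
    -- which is at least the second-highest valuation among `s`'s children
    bstar v ((T.agents.filter (fun c => T.parent c = T.s)).filter
        (fun c => ∃ c' ∈ T.agents.filter (fun c => T.parent c = T.s), v c < v c'))
      ≤ bstar v ((T.agents.filter (fun c => T.parent c = T.s)).erase (T.pathVx w 1)) ∧
    -- hence the TRDM revenue is at least the second-price revenue without referrals
    bstar v ((T.agents.filter (fun c => T.parent c = T.s)).filter
        (fun c => ∃ c' ∈ T.agents.filter (fun c => T.parent c = T.s), v c < v c'))
      ≤ bstar v (T.Vminus T.agents (T.pathVx w 1)) :=
  trdm_revenue_ge_second_price_general T v hpos w hw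
end

section
/- The TRDM revenue is at least the revenue of the VCG mechanism with referrals and attains the upper bound b*_{V_{-r_s^*}}: under truthful bidding, Σ_{j=1}^{k−1} (b*_{V_{-a_j}} − v_w) + b*_{V_{-w}} ≤ b*_{V_{-r_s^*}}, where the left-hand side is the VCG revenue (each non-winner path agent a_j, 1 ≤ j ≤ k−1, receives the VCG reward v_w − b*_{V_{-a_j}}, and the winner pays b*_{V_{-w}}) and the right-hand side is the TRDM revenue. -/
open Classical

/-!
Every path agent `a_j` with `j < k` has the winner `w` among its descendants, and `V_{-w}`
excludes `w` too; as `w` is the unique highest bidder, all these sets have highest bid at most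
`v_w`. Hence each term `b*_{V_{-a_j}} − v_w` with `j ≥ 2` is nonpositive and
`b*_{V_{-w}} ≤ v_w`, so the VCG revenue is at most `(b*_{V_{-a_1}} − v_w) + v_w`.
-/

namespace DiffusionTree

variable {α : Type*}

theorem bstar_le_s11 {b : α → ℝ} {S : Finset α} {c : ℝ} (hc : 0 ≤ c) (h : ∀ j ∈ S, b j ≤ c) :
    bstar b S ≤ c :=
  (WithBot.unbotD_le_iff fun _ => hc).2 <|
    Finset.max_le fun _ hx => by
      obtain ⟨j, hj, rfl⟩ := Finset.mem_image.1 hx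
      exact WithBot.coe_le_coe.2 (h j hj)

theorem mem_agents [Fintype α] {T : DiffusionTree α} {x : α} : x ∈ T.agents ↔ x ≠ T.s := by
  simp [agents]

theorem depth_s (T : DiffusionTree α) : T.depth T.s = 0 :=
  (Nat.find_eq_zero _).2 rfl

theorem ne_s_of_depth_ne_zero {T : DiffusionTree α} {x : α} (h : T.depth x ≠ 0) : x ≠ T.s :=
  fun hx => h (hx ▸ T.depth_s)

theorem pathVx_one_of_depth_le_one {T : DiffusionTree α} {w : α} (h : T.depth w ≤ 1) :
    T.pathVx w 1 = w := by
  simp [pathVx, Nat.sub_eq_zero_of_le h]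

theorem desc_pathVx {T : DiffusionTree α} {w : α} {j : ℕ} (hj : j < T.depth w) :
    T.desc (T.pathVx w j) w :=
  ⟨T.depth w - j, Nat.sub_pos_of_lt hj, rfl⟩

theorem self_notMem_Vminus (T : DiffusionTree α) (A : Finset α) (i : α) :
    i ∉ T.Vminus A i :=
  fun h => (Finset.mem_filter.1 h).2.1 rfl

theorem notMem_Vminus_of_desc {T : DiffusionTree α} {A : Finset α} {i j : α}
    (h : T.desc i j) : j ∉ T.Vminus A i :=
  fun hj => (Finset.mem_filter.1 hj).2.2 h

theorem Vminus_subset (T : DiffusionTree α) (A : Finset α) (i : α) : T.Vminus A i ⊆ A :=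
  Finset.filter_subset _ _

end DiffusionTree

open DiffusionTree in
theorem trdm_revenue_ge_vcg_general
    {α : Type*} [Fintype α] (T : DiffusionTree α)
    (v : α → ℝ) (hpos : ∀ j ∈ T.agents, 0 ≤ v j)
    (w : α)
    (hmax : ∀ j ∈ T.agents, j ≠ w → v j < v w) :
    (∑ j ∈ Finset.Ico 1 (T.depth w),
        (bstar v (T.Vminus T.agents (T.pathVx w j)) - v w))
      + bstar v (T.Vminus T.agents w)
      ≤ bstar v (T.Vminus T.agents (T.pathVx w 1)) := by
  rcases le_or_gt (T.depth w) 1 with hk | hk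
  · simp [Finset.Ico_eq_empty_of_le hk, pathVx_one_of_depth_le_one hk]
  have hw : w ∈ T.agents := mem_agents.2 (ne_s_of_depth_ne_zero (by omega))
  have hle : ∀ i, w ∉ T.Vminus T.agents i → bstar v (T.Vminus T.agents i) ≤ v w :=
    fun i hi => bstar_le_s11 (hpos w hw) fun j hj =>
      (hmax j (T.Vminus_subset _ _ hj) (ne_of_mem_of_not_mem hj hi)).le
  have hrewards : ∑ j ∈ Finset.Ico 2 (T.depth w),
      (bstar v (T.Vminus T.agents (T.pathVx w j)) - v w) ≤ 0 :=
    Finset.sum_nonpos fun j hj =>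
      sub_nonpos.2 (hle _ (notMem_Vminus_of_desc (desc_pathVx (Finset.mem_Ico.1 hj).2)))
  have hwinner := hle w (T.self_notMem_Vminus _ w)
  rw [Finset.sum_eq_sum_Ico_succ_bot hk]
  linarith

open DiffusionTree in
/-- The TRDM revenue is at least the revenue of the VCG
mechanism with referrals and attains the upper bound `b*_{V_{-r_s^*}}`: under
truthful bidding, `Σ_{j=1}^{k−1} (b*_{V_{-a_j}} − v_w) + b*_{V_{-w}} ≤ b*_{V_{-r_s^*}}`,
where the left-hand side is the VCG revenue (each non-winner path agent `a_j`
receives the VCG reward `v_w − b*_{V_{-a_j}}` and the winner pays `b*_{V_{-w}}`)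
and the right-hand side is the TRDM revenue. -/
theorem trdm_revenue_ge_vcg
    {α : Type*} [Fintype α] (T : DiffusionTree α)
    (v : α → ℝ) (hpos : ∀ j ∈ T.agents, 0 ≤ v j)
    (hdist : ∀ j ∈ T.agents, ∀ j' ∈ T.agents, j ≠ j' → v j ≠ v j')
    (w : α) (hw : w ∈ T.agents)
    (hmax : ∀ j ∈ T.agents, j ≠ w → v j < v w) :
    (∑ j ∈ Finset.Ico 1 (T.depth w),
        (bstar v (T.Vminus T.agents (T.pathVx w j)) - v w))
      + bstar v (T.Vminus T.agents w)
      ≤ bstar v (T.Vminus T.agents (T.pathVx w 1)) :=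
  trdm_revenue_ge_vcg_general T v hpos w hmax
end
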